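/- arXiv:2208.03208 — 3 statements merged into one kernel-verified Lean document; each statement's English description precedes it below -/
import Mathlib

section
/- Let z, q ∈ ℂ² with a := z·q̄ ≠ 0, and let s ∈ ℂ satisfy s² = a² + 1 and s ≠ −1 (for instance the principal complex square root of a² + 1). Then Φ_EH(z) + Φ_EH(q) − 2 Re( s + Log a − Log(1 + s) ) = √(‖z‖⁴+1) + √(‖q‖⁴+1) − 2 Re s + log( ‖z‖² ‖q‖² |1+s|² / ( |a|² (1 + √(‖z‖⁴+1)) (1 + √(‖q‖⁴+1)) ) ), where Log denotes the principal complex logarithm. (This computes Calabi's diastasis function of the Eguchi–Hanson metric g_EH centered at q.) -/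
/-!
Since `a = z·q̄ ≠ 0` forces `z, q ≠ 0`, every real logarithm involved is taken of a positive
number; with `Re (Log w) = log ‖w‖` the identity is then `log x + log y = log (x y)`.
-/

open scoped BigOperators

/-- The standard Hermitian pairing `z·w̄ = ∑ k, z k * conj (w k)` on `ℂⁿ`. -/
noncomputable def herm {n : ℕ} (z w : EuclideanSpace ℂ (Fin n)) : ℂ :=
  ∑ k, z k * (starRingEnd ℂ) (w k)

/-- The Eguchi–Hanson Kähler potential
`Φ_EH(z) = √(‖z‖⁴+1) + log ‖z‖² − log(1 + √(‖z‖⁴+1))` on `ℂ²∖{0}`. -/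
noncomputable def phiEH (z : EuclideanSpace ℂ (Fin 2)) : ℝ :=
  Real.sqrt (‖z‖ ^ 4 + 1) + Real.log (‖z‖ ^ 2)
    - Real.log (1 + Real.sqrt (‖z‖ ^ 4 + 1))

@[simp]
theorem herm_zero_left {n : ℕ} (w : EuclideanSpace ℂ (Fin n)) : herm 0 w = 0 := by
  simp [herm]

@[simp]
theorem herm_zero_right {n : ℕ} (z : EuclideanSpace ℂ (Fin n)) : herm z 0 = 0 := by
  simp [herm]

theorem phiEH_eq_sqrt_add_log_div {z : EuclideanSpace ℂ (Fin 2)} (hz : z ≠ 0) :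
    phiEH z = Real.sqrt (‖z‖ ^ 4 + 1) + Real.log (‖z‖ ^ 2 / (1 + Real.sqrt (‖z‖ ^ 4 + 1))) := by
  have hz2 : ‖z‖ ^ 2 ≠ 0 := pow_ne_zero 2 (norm_ne_zero_iff.mpr hz)
  rw [phiEH, Real.log_div hz2 (by positivity)]
  ring

theorem Complex.two_mul_re_log_sub_log {a b : ℂ} (ha : a ≠ 0) (hb : b ≠ 0) :
    2 * (Complex.log b - Complex.log a).re = Real.log (‖b‖ ^ 2 / ‖a‖ ^ 2) := by
  rw [Real.log_div (by positivity) (by positivity), Real.log_pow, Real.log_pow,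
    Complex.sub_re, Complex.log_re, Complex.log_re]
  push_cast
  ring

theorem eguchiHanson_diastasis_general (z q : EuclideanSpace ℂ (Fin 2)) (a s : ℂ)
    (ha : a = herm z q) (ha0 : a ≠ 0) (hs1 : s ≠ -1) :
    phiEH z + phiEH q - 2 * (s + Complex.log a - Complex.log (1 + s)).re
      = Real.sqrt (‖z‖ ^ 4 + 1) + Real.sqrt (‖q‖ ^ 4 + 1) - 2 * s.re
        + Real.log (‖z‖ ^ 2 * ‖q‖ ^ 2 * ‖1 + s‖ ^ 2 /
            (‖a‖ ^ 2 * (1 + Real.sqrt (‖z‖ ^ 4 + 1))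
              * (1 + Real.sqrt (‖q‖ ^ 4 + 1)))) := by
  have hz : z ≠ 0 := by rintro rfl; exact ha0 (by simp [ha])
  have hq : q ≠ 0 := by rintro rfl; exact ha0 (by simp [ha])
  have hs0 : 1 + s ≠ 0 := fun h => hs1 (by linear_combination h)
  have hre : 2 * (s + Complex.log a - Complex.log (1 + s)).re
      = 2 * s.re - Real.log (‖1 + s‖ ^ 2 / ‖a‖ ^ 2) := by
    rw [← Complex.two_mul_re_log_sub_log ha0 hs0]
    simp only [Complex.add_re, Complex.sub_re]
    ring
  have hlog : Real.log (‖z‖ ^ 2 * ‖q‖ ^ 2 * ‖1 + s‖ ^ 2 /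
        (‖a‖ ^ 2 * (1 + Real.sqrt (‖z‖ ^ 4 + 1)) * (1 + Real.sqrt (‖q‖ ^ 4 + 1))))
      = Real.log (‖z‖ ^ 2 / (1 + Real.sqrt (‖z‖ ^ 4 + 1)))
        + Real.log (‖q‖ ^ 2 / (1 + Real.sqrt (‖q‖ ^ 4 + 1)))
        + Real.log (‖1 + s‖ ^ 2 / ‖a‖ ^ 2) := by
    rw [← Real.log_mul (by positivity) (by positivity),
      ← Real.log_mul (by positivity) (by positivity), div_mul_div_comm, div_mul_div_comm, mul_comm (_ * _) (‖a‖ ^ 2), ← mul_assoc]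
  rw [phiEH_eq_sqrt_add_log_div hz, phiEH_eq_sqrt_add_log_div hq, hre, hlog]
  ring

/-- Calabi's diastasis function of the Eguchi–Hanson metric centered at `q`. -/
theorem eguchiHanson_diastasis (z q : EuclideanSpace ℂ (Fin 2)) (a s : ℂ)
    (ha : a = herm z q) (ha0 : a ≠ 0) (hs : s ^ 2 = a ^ 2 + 1) (hs1 : s ≠ -1) :
    phiEH z + phiEH q - 2 * (s + Complex.log a - Complex.log (1 + s)).re
      = Real.sqrt (‖z‖ ^ 4 + 1) + Real.sqrt (‖q‖ ^ 4 + 1) - 2 * s.re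
        + Real.log (‖z‖ ^ 2 * ‖q‖ ^ 2 * ‖1 + s‖ ^ 2 /
            (‖a‖ ^ 2 * (1 + Real.sqrt (‖z‖ ^ 4 + 1))
              * (1 + Real.sqrt (‖q‖ ^ 4 + 1)))) :=
  eguchiHanson_diastasis_general z q a s ha ha0 hs1
end

section
/- Let (w₁, w₂) ∈ ℂ² with w₁ ≠ 0 and set z = (w₁, w₁ w₂) ∈ ℂ². Then √(‖z‖⁴+1) + log ‖z‖² − log(1 + √(‖z‖⁴+1)) = √(|w₁|⁴ (1+|w₂|²)² + 1) + log( (1 + |w₂|²) / (1 + √(|w₁|⁴ (1+|w₂|²)² + 1)) ) + log |w₁|². (Hence, in the first coordinate chart of the blow-up of ℂ² at the origin, the function φ^{EH}_1(w) = √(|w₁|⁴(1+|w₂|²)²+1) + log((1+|w₂|²)/(1+√(|w₁|⁴(1+|w₂|²)²+1))) differs from the pullback of the Eguchi–Hanson potential by the pluriharmonic function log |w₁|².) -/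
/-! Writing `r = ‖z‖²`, the potential is the radial profile `√(r² + 1) + log r - log (1 + √(r² + 1))`.
On the chart `z = (w₁, w₁ w₂)` one has `r = |w₁|² (1 + |w₂|²)` with both factors positive, so
`log r` splits as `log |w₁|² + log (1 + |w₂|²)`, and the second summand combines with
`- log (1 + √(r² + 1))` into a single logarithm of a quotient. -/

open Real

theorem EuclideanSpace.norm_sq_fin_two {𝕜 : Type*} [RCLike 𝕜] (z : EuclideanSpace 𝕜 (Fin 2)) :
    ‖z‖ ^ 2 = ‖z 0‖ ^ 2 + ‖z 1‖ ^ 2 := by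
  rw [EuclideanSpace.norm_sq_eq, Fin.sum_univ_two]

theorem EuclideanSpace.norm_sq_of_eq_mul {𝕜 : Type*} [RCLike 𝕜] (z : EuclideanSpace 𝕜 (Fin 2))
    {a b : 𝕜} (h0 : z 0 = a) (h1 : z 1 = a * b) : ‖z‖ ^ 2 = ‖a‖ ^ 2 * (1 + ‖b‖ ^ 2) := by
  rw [EuclideanSpace.norm_sq_fin_two, h0, h1, norm_mul]
  ring

theorem sqrt_add_log_sub_log_one_add_sqrt_mul {s t : ℝ} (hs : 0 < s) (ht : 0 < t) :
    √((s * t) ^ 2 + 1) + log (s * t) - log (1 + √((s * t) ^ 2 + 1))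
      = √((s * t) ^ 2 + 1) + log (t / (1 + √((s * t) ^ 2 + 1))) + log s := by
  have hden : 0 < 1 + √((s * t) ^ 2 + 1) := by positivity
  rw [log_mul hs.ne' ht.ne', log_div ht.ne' hden.ne']
  ring

/-- In the first coordinate chart of the blow-up of `ℂ²` at the origin, the pullback of the
Eguchi–Hanson potential `Φ_EH(z) = √(‖z‖⁴+1) + log ‖z‖² − log(1 + √(‖z‖⁴+1))` differs from
`φ^{EH}_1(w) = √(|w₁|⁴(1+|w₂|²)²+1) + log((1+|w₂|²)/(1+√(|w₁|⁴(1+|w₂|²)²+1)))` by the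
pluriharmonic function `log |w₁|²`. -/
theorem eguchiHanson_potential_chart (w₁ w₂ : ℂ) (hw₁ : w₁ ≠ 0)
    (z : EuclideanSpace ℂ (Fin 2)) (hz0 : z 0 = w₁) (hz1 : z 1 = w₁ * w₂) :
    Real.sqrt (‖z‖ ^ 4 + 1) + Real.log (‖z‖ ^ 2)
        - Real.log (1 + Real.sqrt (‖z‖ ^ 4 + 1))
      = Real.sqrt (‖w₁‖ ^ 4 * (1 + ‖w₂‖ ^ 2) ^ 2 + 1)
        + Real.log ((1 + ‖w₂‖ ^ 2) /
            (1 + Real.sqrt (‖w₁‖ ^ 4 * (1 + ‖w₂‖ ^ 2) ^ 2 + 1)))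
        + Real.log (‖w₁‖ ^ 2) := by
  have hnorm := EuclideanSpace.norm_sq_of_eq_mul z hz0 hz1
  have hz4 : ‖z‖ ^ 4 = (‖w₁‖ ^ 2 * (1 + ‖w₂‖ ^ 2)) ^ 2 := by rw [← hnorm]; ring
  have hw4 : ‖w₁‖ ^ 4 * (1 + ‖w₂‖ ^ 2) ^ 2 = (‖w₁‖ ^ 2 * (1 + ‖w₂‖ ^ 2)) ^ 2 := by ring
  rw [hz4, hnorm, hw4]
  exact sqrt_add_log_sub_log_one_add_sqrt_mul (by positivity) (by positivity)
end

section
/- Let n ≥ 1, λ ∈ ℂ, and e ∈ ℂⁿ with ‖e‖ = 1, and define φ(u) = (u + λ) · e for u ∈ ℂ. Then for all z, w ∈ ℂ with z ≠ −λ and w ≠ −λ: ‖φ(z) − φ(w)‖² + log( ‖φ(z)‖² ‖φ(w)‖² / |φ(z)·φ(w)̄|² ) = |z − w|². (This says that the map Φ(z) = ((z+λ)e, [e]) of Theorem 1 pulls back the diastasis of the generalized Burns–Simanca metric g_S centered at φ(w) to the flat diastasis |z − w|², i.e. Φ : (ℂ, g₀) → (C̃ⁿ, g_S) is a holomorphic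 isometry of the flat complex line into the generalized Burns–Simanca manifold.) -/
/-! On the complex line `ℂ e` the Cauchy–Schwarz inequality is an equality, so the logarithmic
term of the Burns–Simanca diastasis vanishes there, while `u ↦ (u + λ) • e` is an isometry onto
that line. -/

open scoped BigOperators

open scoped InnerProductSpace

lemma herm_eq_inner {n : ℕ} (z w : EuclideanSpace ℂ (Fin n)) : herm z w = ⟪w, z⟫_ℂ := by
  simp [herm, PiLp.inner_apply]

section CollinearInner

variable {𝕜 E : Type*} [RCLike 𝕜] [NormedAddCommGroup E] [InnerProductSpace 𝕜 E]

lemma norm_inner_smul_smul_self (a b : 𝕜) (v : E) :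
    ‖⟪a • v, b • v⟫_𝕜‖ = ‖a • v‖ * ‖b • v‖ := by
  rw [inner_smul_left, inner_smul_right, inner_self_eq_norm_sq_to_K]
  simp only [norm_mul, RCLike.norm_conj, norm_pow, RCLike.norm_ofReal, abs_norm, norm_smul]
  ring

lemma log_normSq_mul_normSq_div_normSq_inner_smul_smul_self {a b : 𝕜} {v : E}
    (ha : a ≠ 0) (hb : b ≠ 0) (hv : v ≠ 0) :
    Real.log (‖a • v‖ ^ 2 * ‖b • v‖ ^ 2 / ‖⟪b • v, a • v⟫_𝕜‖ ^ 2) = 0 := by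
  have hab : ‖a • v‖ * ‖b • v‖ ≠ 0 := by simp [ha, hb, hv]
  rw [norm_inner_smul_smul_self, ← mul_pow, mul_comm ‖b • v‖, div_self (pow_ne_zero 2 hab),
    Real.log_one]

end CollinearInner

theorem line_isometry_burnsSimanca_general (n : ℕ) (lam : ℂ)
    (e : EuclideanSpace ℂ (Fin n)) (he : ‖e‖ = 1)
    (φ : ℂ → EuclideanSpace ℂ (Fin n)) (hφ : ∀ u, φ u = (u + lam) • e)
    (z w : ℂ) (hz : z ≠ -lam) (hw : w ≠ -lam) :
    ‖φ z - φ w‖ ^ 2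
      + Real.log (‖φ z‖ ^ 2 * ‖φ w‖ ^ 2 / ‖herm (φ z) (φ w)‖ ^ 2)
      = ‖z - w‖ ^ 2 := by
  have he₀ : e ≠ 0 := norm_ne_zero_iff.mp (by rw [he]; exact one_ne_zero)
  have hz₀ : z + lam ≠ 0 := fun h => hz (eq_neg_of_add_eq_zero_left h)
  have hw₀ : w + lam ≠ 0 := fun h => hw (eq_neg_of_add_eq_zero_left h)
  rw [hφ, hφ, herm_eq_inner, log_normSq_mul_normSq_div_normSq_inner_smul_smul_self hz₀ hw₀ he₀,
    add_zero, ← sub_smul, add_sub_add_right_eq_sub, norm_smul, he, mul_one]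

/-- The map `φ(u) = (u + λ)·e` (`‖e‖ = 1`), i.e. `Φ(z) = ((z+λ)e, [e])`, pulls back the
diastasis of the generalized Burns–Simanca metric `g_S` centered at `φ(w)` to the flat
diastasis `|z − w|²`: it is a holomorphic isometry of `(ℂ, g₀)` into `(C̃ⁿ, g_S)`. -/
theorem line_isometry_burnsSimanca (n : ℕ) (hn : 1 ≤ n) (lam : ℂ)
    (e : EuclideanSpace ℂ (Fin n)) (he : ‖e‖ = 1)
    (φ : ℂ → EuclideanSpace ℂ (Fin n)) (hφ : ∀ u, φ u = (u + lam) • e)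
    (z w : ℂ) (hz : z ≠ -lam) (hw : w ≠ -lam) :
    ‖φ z - φ w‖ ^ 2
      + Real.log (‖φ z‖ ^ 2 * ‖φ w‖ ^ 2 / ‖herm (φ z) (φ w)‖ ^ 2)
      = ‖z - w‖ ^ 2 :=
  line_isometry_burnsSimanca_general n lam e he φ hφ z w hz hw
end
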